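/- Let ħ > 0 and let Σ be a real symmetric positive definite 2n×2n matrix with blocks Σ = [[Σ_XX, Σ_XP],[Σ_PX, Σ_PP]] such that the complex Hermitian matrix Σ + (iħ/2)J is positive semidefinite. Let X = {x ∈ ℝⁿ : (1/2) Σ_XX⁻¹ x·x ≤ 1} and P = {p ∈ ℝⁿ : (1/2) Σ_PP⁻¹ p·p ≤ 1} be the orthogonal projections of the covariance ellipsoid Ω_Σ onto the x-space and p-space. Then the ħ-polar dual X^ħ = {p ∈ ℝⁿ : sup_{x∈X} p·x ≤ ħ} satisfies X^ħ ⊆ P. -/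

import Mathlib

open Matrix ComplexOrder MeasureTheory

noncomputable section

/-- Phase space ℝ^{2n} ≃ ℝⁿ × ℝⁿ, with coordinates z = (x,p). -/
abbrev PS (n : ℕ) := Fin n ⊕ Fin n → ℝ

/-- The standard symplectic matrix J = [[0, I], [-I, 0]]. -/
def Jmat (n : ℕ) : Matrix (Fin n ⊕ Fin n) (Fin n ⊕ Fin n) ℝ :=
  Matrix.fromBlocks 0 1 (-1) 0

/-- The standard symplectic form ω(z,z′) = (Jz)·z′. -/
def symp (n : ℕ) (z z' : PS n) : ℝ := (Jmat n).mulVec z ⬝ᵥ z'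

/-- The symplectic group Sp(n) = {S : SᵀJS = J}. -/
def Sp (n : ℕ) : Set (Matrix (Fin n ⊕ Fin n) (Fin n ⊕ Fin n) ℝ) :=
  {S | Sᵀ * Jmat n * S = Jmat n}

/-!
Write `α = p·Σ_XX p` and `β = p·Σ_PP⁻¹ p`. Testing `p ∈ X^ħ` against the point of `X` where
`x ↦ p·x` is maximal gives `√(2α) ≤ ħ`. Evaluating the positive semidefinite Hermitian form of
`Σ + (iħ/2)J` at `(p, i(ħ/2)Σ_PP⁻¹p)` gives `(ħ²/4)β ≤ α`, hence `(ħ²/4)β ≤ ħ²/2`, i.e. `β ≤ 2`.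
-/

section

variable {ι : Type*} [Fintype ι]

def covEllipsoid [DecidableEq ι] (A : Matrix ι ι ℝ) : Set (ι → ℝ) :=
  {x | (1 / 2 : ℝ) * (A⁻¹ *ᵥ x ⬝ᵥ x) ≤ 1}

def polarDual (ℏ : ℝ) (X : Set (ι → ℝ)) : Set (ι → ℝ) :=
  {p | ∀ x ∈ X, p ⬝ᵥ x ≤ ℏ}

/-- The support function of `covEllipsoid A` at `p` is `√(2 p·Ap)`, attained at a multiple
of `A p`. -/
theorem two_mul_dotProduct_mulVec_le_sq_of_mem_polarDual [DecidableEq ι] {A : Matrix ι ι ℝ}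
    (hA : IsUnit A) {ℏ : ℝ} {p : ι → ℝ} (hp : p ∈ polarDual ℏ (covEllipsoid A)) :
    2 * (p ⬝ᵥ A *ᵥ p) ≤ ℏ ^ 2 := by
  set α := p ⬝ᵥ A *ᵥ p
  rcases le_or_gt α 0 with hα | hα
  · nlinarith [sq_nonneg ℏ]
  set c := √(2 / α)
  have hc : c ^ 2 * α = 2 := by
    rw [Real.sq_sqrt (by positivity)]
    field_simp
  have hx : c • (A *ᵥ p) ∈ covEllipsoid A := by
    have hinv : A⁻¹ * A = 1 := nonsing_inv_mul A ((isUnit_iff_isUnit_det A).mp hA)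
    simp only [covEllipsoid, Set.mem_ofPred_eq, mulVec_smul, mulVec_mulVec, hinv, one_mulVec,
      smul_dotProduct, dotProduct_smul, smul_eq_mul]
    nlinarith
  have hpx : c * α ≤ ℏ := by
    simpa only [dotProduct_smul, smul_eq_mul] using hp _ hx
  calc 2 * α = (c * α) ^ 2 := by rw [mul_pow, sq α, ← mul_assoc, hc]
    _ ≤ ℏ ^ 2 := pow_le_pow_left₀ (by positivity) hpx 2

theorem re_star_dotProduct_mulVec_ofReal_add_I_smul (A B : Matrix ι ι ℝ) (t : ℝ)
    (x y : ι → ℝ) :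
    RCLike.re (star (fun i => (x i + y i * Complex.I : ℂ)) ⬝ᵥ
        ((A.map Complex.ofReal + ((t : ℂ) * Complex.I) • B.map Complex.ofReal) *ᵥ
          fun i => (x i + y i * Complex.I : ℂ))) =
      x ⬝ᵥ A *ᵥ x + y ⬝ᵥ A *ᵥ y - t * (x ⬝ᵥ B *ᵥ y - y ⬝ᵥ B *ᵥ x) := by
  simp only [dotProduct, mulVec, Finset.mul_sum, ← Finset.sum_add_distrib,
    ← Finset.sum_sub_distrib, RCLike.re_to_complex, Complex.re_sum]
  refine Finset.sum_congr rfl fun i _ => Finset.sum_congr rfl fun j _ => ?_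
  simp [Complex.mul_re, Complex.mul_im]
  ring

end

/-- Evaluate the Hermitian form of `Σ + (iℏ/2)J` at `(u, i v)`. -/
theorem mul_dotProduct_le_of_posSemidef_add_I_smul_Jmat {n : ℕ} {ℏ : ℝ}
    {Sxx Sxp Spx Spp : Matrix (Fin n) (Fin n) ℝ}
    (hquant : ((Matrix.fromBlocks Sxx Sxp Spx Spp).map (Complex.ofReal) +
        (((ℏ : ℂ) / 2) * Complex.I) • (Jmat n).map (Complex.ofReal)).PosSemidef)
    (u v : Fin n → ℝ) :
    ℏ * (u ⬝ᵥ v) ≤ u ⬝ᵥ Sxx *ᵥ u + v ⬝ᵥ Spp *ᵥ v := by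
  have h := hquant.re_dotProduct_nonneg fun i =>
    (Sum.elim u (0 : Fin n → ℝ) i + Sum.elim (0 : Fin n → ℝ) v i * Complex.I)
  rw [show (ℏ : ℂ) / 2 = ((ℏ / 2 : ℝ) : ℂ) by push_cast; rfl,
    re_star_dotProduct_mulVec_ofReal_add_I_smul] at h
  simp only [Jmat, fromBlocks_mulVec, Sum.elim_comp_inl, Sum.elim_comp_inr, mulVec_zero,
    zero_mulVec, one_mulVec, neg_mulVec, sumElim_dotProduct_sumElim, zero_dotProduct,
    dotProduct_zero, dotProduct_neg, add_zero, zero_add, sub_neg_eq_add, sub_nonneg,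
    dotProduct_comm v u] at h
  linarith

theorem polar_dual_of_projection_subset (n : ℕ) (ℏ : ℝ)
    (Sxx Sxp Spx Spp : Matrix (Fin n) (Fin n) ℝ)
    (hSig : (Matrix.fromBlocks Sxx Sxp Spx Spp).PosDef)
    (hquant : ((Matrix.fromBlocks Sxx Sxp Spx Spp).map (Complex.ofReal) +
        (((ℏ : ℂ) / 2) * Complex.I) • (Jmat n).map (Complex.ofReal)).PosSemidef) :
    {p : Fin n → ℝ |
        ∀ x : Fin n → ℝ, (1 / 2 : ℝ) * (Sxx⁻¹.mulVec x ⬝ᵥ x) ≤ 1 → p ⬝ᵥ x ≤ ℏ}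
      ⊆ {p : Fin n → ℝ | (1 / 2 : ℝ) * (Spp⁻¹.mulVec p ⬝ᵥ p) ≤ 1} := by
  change polarDual ℏ (covEllipsoid Sxx) ⊆ covEllipsoid Spp
  intro p hp
  have hxx : Sxx.PosDef := hSig.submatrix Sum.inl_injective
  have hpp : Spp.PosDef := hSig.submatrix Sum.inr_injective
  have hα := two_mul_dotProduct_mulVec_le_sq_of_mem_polarDual hxx.isUnit hp
  rcases eq_or_ne p 0 with rfl | hp0
  · simp [covEllipsoid]
  have hαpos : 0 < p ⬝ᵥ Sxx *ᵥ p := by simpa using hxx.dotProduct_mulVec_pos hp0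
  set q := Spp⁻¹ *ᵥ p
  have hq : Spp *ᵥ q = p := by
    rw [mulVec_mulVec, mul_nonsing_inv Spp ((isUnit_iff_isUnit_det Spp).mp hpp.isUnit),
      one_mulVec]
  have key := mul_dotProduct_le_of_posSemidef_add_I_smul_Jmat hquant p ((ℏ / 2) • q)
  simp only [mulVec_smul, dotProduct_smul, smul_dotProduct, smul_eq_mul, hq,
    dotProduct_comm p q] at key
  change 1 / 2 * (q ⬝ᵥ p) ≤ 1
  nlinarith
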